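/- Let A be the Fell C*-algebra of a continuous Hilbert bundle (T, {H_t}, Ω) over a locally compact Hausdorff space T and let I ⊆ J be essential ideals of A. If x is a bounded operator field on X^J (x(t) ∈ B(H_t)) that is strictly continuous with respect to F((Ω|_{X^J})₀), then the restriction of x to X^I is strictly continuous with respect to F((Ω|_{X^I})₀); moreover the induced map M(J) → M(I), x ↦ x|_{X^I}, is an injective *-homomorphism. -/

import Mathlib

/- Common definitions: continuous Hilbert bundles and Fell (spatial continuous
trace) C*-algebras, following Fell (1961). -/

noncomputable section

/-- A vector field `ξ` is a local uniform limit of members of `S`. -/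
def LocUnifApprox {T : Type*} [TopologicalSpace T] {H : T → Type*}
    [∀ t, NormedAddCommGroup (H t)] (S : Set (∀ t, H t)) (ξ : ∀ t, H t) : Prop :=
  ∀ (t₀ : T) (ε : ℝ), 0 < ε → ∃ U : Set T, IsOpen U ∧ t₀ ∈ U ∧
    ∃ ω ∈ S, ∀ t ∈ U, ‖ω t - ξ t‖ < ε

/-- Axioms (I)-(IV) of a continuous Hilbert bundle `(T, {H t}, Ω)`. -/
structure IsCtsHilbertBundle {T : Type*} [TopologicalSpace T] {H : T → Type*}
    [∀ t, NormedAddCommGroup (H t)] [∀ t, InnerProductSpace ℂ (H t)]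
    (Ω : Set (∀ t, H t)) : Prop where
  /-- axiom (I): `Ω` is a `C(T)`-module (additive part) -/
  zero_mem : (fun t => (0 : H t)) ∈ Ω
  add_mem : ∀ ω ∈ Ω, ∀ ν ∈ Ω, (fun t => ω t + ν t) ∈ Ω
  /-- axiom (I): `C(T)`-action -/
  smul_mem : ∀ (f : C(T, ℂ)), ∀ ω ∈ Ω, (fun t => f t • ω t) ∈ Ω
  /-- axiom (II) -/
  full : ∀ (t : T) (v : H t), ∃ ω ∈ Ω, ω t = v
  /-- axiom (III) -/
  norm_continuous : ∀ ω ∈ Ω, Continuous fun t => ‖ω t‖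
  /-- axiom (IV) -/
  closed_locUnif : ∀ ξ : ∀ t, H t, LocUnifApprox Ω ξ → ξ ∈ Ω

variable {T : Type*} [TopologicalSpace T] {H : T → Type*}
  [∀ t, NormedAddCommGroup (H t)] [∀ t, InnerProductSpace ℂ (H t)]
  [∀ t, CompleteSpace (H t)]

/-- An operator field is weakly continuous w.r.t. the bundle `Ω`. -/
def WeaklyCts (Ω : Set (∀ t, H t)) (a : ∀ t, H t →L[ℂ] H t) : Prop :=
  ∀ ω₁ ∈ Ω, ∀ ω₂ ∈ Ω, Continuous fun t => (inner ℂ (a t (ω₁ t)) (ω₂ t) : ℂ)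

/-- An operator field is almost finite-dimensional w.r.t. the bundle `Ω`. -/
def AlmostFinDim (Ω : Set (∀ t, H t)) (a : ∀ t, H t →L[ℂ] H t) : Prop :=
  ∀ (t₀ : T) (ε : ℝ), 0 < ε → ∃ U : Set T, IsOpen U ∧ t₀ ∈ U ∧
    ∃ (n : ℕ) (ω : Fin n → ∀ t, H t), (∀ i, ω i ∈ Ω) ∧ ∀ t ∈ U,
      LinearIndependent ℂ (fun i => ω i t) ∧
      ∃ p : H t →L[ℂ] H t, IsIdempotentElem p ∧ IsSelfAdjoint p ∧
        LinearMap.range (p : H t →ₗ[ℂ] H t) = Submodule.span ℂ (Set.range fun i => ω i t) ∧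
        ‖p * a t * p - a t‖ < ε

/-- The Fell (spatial continuous-trace) C*-algebra `A(T, {H t}, Ω)`: all weakly
continuous, almost finite-dimensional operator fields whose pointwise norm
function lies in `C₀(T)`; a set of operator fields with pointwise operations. -/
def FellAlgebra (Ω : Set (∀ t, H t)) : Set (∀ t, H t →L[ℂ] H t) :=
  {a | WeaklyCts Ω a ∧ AlmostFinDim Ω a ∧ (Continuous fun t => ‖a t‖) ∧
    Filter.Tendsto (fun t => ‖a t‖) (Filter.cocompact T) (nhds 0)}

/-- `I` is a (closed, two-sided, star) ideal of the C*-algebra of operator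
fields `A` (with pointwise operations and supremum norm). -/
structure IsIdealOf (A I : Set (∀ t, H t →L[ℂ] H t)) : Prop where
  subset : I ⊆ A
  zero_mem : (0 : ∀ t, H t →L[ℂ] H t) ∈ I
  add_mem : ∀ a ∈ I, ∀ b ∈ I, a + b ∈ I
  smul_mem : ∀ (c : ℂ), ∀ a ∈ I, c • a ∈ I
  star_mem : ∀ a ∈ I, star a ∈ I
  mul_mem_left : ∀ a ∈ A, ∀ b ∈ I, a * b ∈ I
  mul_mem_right : ∀ a ∈ I, ∀ b ∈ A, a * b ∈ I
  norm_closed : ∀ a ∈ A, (∀ ε : ℝ, 0 < ε → ∃ b ∈ I, ∀ t, ‖a t - b t‖ < ε) → a ∈ I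

/-- `I` is an essential ideal of `A`: it has nonzero intersection with every
nonzero ideal of `A`. -/
def IsEssentialIdealOf (A I : Set (∀ t, H t →L[ℂ] H t)) : Prop :=
  IsIdealOf A I ∧
    ∀ J, IsIdealOf A J → (∃ b ∈ J, b ≠ 0) → ∃ c, c ∈ I ∧ c ∈ J ∧ c ≠ 0

/-- The open set `X^I ⊆ T` associated with an ideal `I`
(the complement of `Z^I = {t | b t = 0 ∀ b ∈ I}`). -/
def idealSupp (I : Set (∀ t, H t →L[ℂ] H t)) : Set T :=
  {t | ∃ b ∈ I, b t ≠ 0}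

/-- `Ω_b`: the bounded vector fields of the bundle. -/
def boundedFields (Ω : Set (∀ t, H t)) : Set (∀ t, H t) :=
  {ω | ω ∈ Ω ∧ ∃ M : ℝ, ∀ t, ‖ω t‖ ≤ M}

/-- The rank-one operator field `Θ_{ω,ν} : ξ ↦ ⟨ξ, ν⟩·ω` (inner product linear
in `ξ`, conjugate-linear in `ν`). -/
def rankOneField (ω ν : ∀ t, H t) : ∀ t, H t →L[ℂ] H t :=
  fun t => (innerSL ℂ (ν t)).smulRight (ω t)

/-- `F(S)`: finite sums of rank-one fields `Θ_{ω,ν}` with `ω, ν ∈ S`. -/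
def finRankFields (S : Set (∀ t, H t)) : Set (∀ t, H t →L[ℂ] H t) :=
  {a | ∃ (n : ℕ) (ω ν : Fin n → ∀ t, H t), (∀ i, ω i ∈ S) ∧ (∀ i, ν i ∈ S) ∧
    a = fun t => ∑ i, rankOneField (ω i) (ν i) t}

/-- An operator field `x` is strictly continuous with respect to a family `F`
of operator fields. -/
def StrictlyCts (F : Set (∀ t, H t →L[ℂ] H t)) (x : ∀ t, H t →L[ℂ] H t) : Prop :=
  ∀ (t₀ : T), ∀ a ∈ F, ∀ ε : ℝ, 0 < ε → ∃ U : Set T, IsOpen U ∧ t₀ ∈ U ∧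
    ∃ b ∈ F, ∀ t ∈ U, ‖(x t - b t) * a t‖ + ‖a t * (x t - b t)‖ < ε

/-- The concrete realisation (Akemann–Pedersen–Tomiyama) of the multiplier
algebra: bounded operator fields, strictly continuous w.r.t. `F`. -/
def MultSet (F : Set (∀ t, H t →L[ℂ] H t)) : Set (∀ t, H t →L[ℂ] H t) :=
  {x | (∃ C : ℝ, ∀ t, ‖x t‖ ≤ C) ∧ StrictlyCts F x}

/-- Conjugation of an operator by a unitary (linear isometric equivalence). -/
def conjCLM {E F : Type*} [NormedAddCommGroup E] [NormedAddCommGroup F]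
    [NormedSpace ℂ E] [NormedSpace ℂ F] (e : E ≃ₗᵢ[ℂ] F) (x : E →L[ℂ] E) :
    F →L[ℂ] F :=
  ((e.toContinuousLinearEquiv : E →L[ℂ] F).comp x).comp
    (e.symm.toContinuousLinearEquiv : F →L[ℂ] E)

end

/-!
Restriction is pointwise, so it is a *-homomorphism and preserves norm bounds. Strict continuity
survives restriction to an open `X ⊆ Y`: multiplying the vector fields of a finite-rank field on
`X` by a bump function that is `1` near `t₀` and compactly supported in `X` gives a finite-rank
field on `Y`, and the approximant found on `Y` is cut off in the same way.

Injectivity rests on density of `X^I` in `X^J`: if `t₀ ∈ X^J` lay outside `closure X^I`, then for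
a bump field `μ` at `t₀` and `b ∈ J` with `b t₀ ≠ 0`, `Θ_{μ,μ} b` would be a nonzero element of the
ideal of elements of `J` vanishing on `closure X^I`, an ideal that meets the essential ideal `I`
trivially. A strictly continuous `x` makes `s ↦ ⟪ζ s, x s (a s (η s))⟫` continuous for finite-rank
`a`, as a locally uniform limit of the same expressions with finite-rank `b` in place of `x`. So
for two multipliers agreeing on the dense set `X^I` these functions agree on all of `X^J`, while at
a point where the multipliers differ a rank-one `a` built from the difference separates them.
-/

open Filter Topology Set
open scoped InnerProductSpace

theorem starProjection_span_singleton_mul_smulRight_innerSL_mul {E : Type*}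
    [NormedAddCommGroup E] [InnerProductSpace ℂ E] [CompleteSpace E] (u : E) :
    (ℂ ∙ u).starProjection * (innerSL ℂ u).smulRight u * (ℂ ∙ u).starProjection =
      (innerSL ℂ u).smulRight u := by
  have hpu : (ℂ ∙ u).starProjection u = u :=
    Submodule.starProjection_eq_self_iff.2 (Submodule.mem_span_singleton_self u)
  ext ξ
  have hsymm := (isSelfAdjoint_starProjection (ℂ ∙ u)).isSymmetric u ξ
  simp_all

section

variable {T : Type*} {H : T → Type*}
  [∀ t, NormedAddCommGroup (H t)] [∀ t, InnerProductSpace ℂ (H t)]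

theorem rankOneField_apply (ω ν : ∀ t, H t) (t : T) (ξ : H t) :
    rankOneField ω ν t ξ = ⟪ν t, ξ⟫_ℂ • ω t := rfl

theorem norm_rankOneField (ω ν : ∀ t, H t) (t : T) :
    ‖rankOneField ω ν t‖ = ‖ν t‖ * ‖ω t‖ := by
  rw [rankOneField, ContinuousLinearMap.norm_smulRight_apply, innerSL_apply_norm]

variable [∀ t, CompleteSpace (H t)]

theorem IsIdealOf.sep_forall_eq_zero {A J : Set (∀ t, H t →L[ℂ] H t)} (hJ : IsIdealOf A J)
    (Z : Set T) : IsIdealOf A {a ∈ J | ∀ t ∈ Z, a t = 0} where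
  subset _ ha := hJ.subset ha.1
  zero_mem := ⟨hJ.zero_mem, fun _ _ => rfl⟩
  add_mem a ha b hb := ⟨hJ.add_mem a ha.1 b hb.1, fun t ht => by simp [ha.2 t ht, hb.2 t ht]⟩
  smul_mem c a ha := ⟨hJ.smul_mem c a ha.1, fun t ht => by simp [ha.2 t ht]⟩
  star_mem a ha := ⟨hJ.star_mem a ha.1, fun t ht => by simp [ha.2 t ht]⟩
  mul_mem_left a haA b hb := ⟨hJ.mul_mem_left a haA b hb.1, fun t ht => by simp [hb.2 t ht]⟩
  mul_mem_right a ha b hbA := ⟨hJ.mul_mem_right a ha.1 b hbA, fun t ht => by simp [ha.2 t ht]⟩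
  norm_closed a haA happ := by
    refine ⟨hJ.norm_closed a haA fun ε hε => ?_, fun t ht => norm_le_zero_iff.1 ?_⟩
    · obtain ⟨b, hb, hab⟩ := happ ε hε
      exact ⟨b, hb.1, hab⟩
    · refine le_of_forall_pos_lt_add fun ε hε => ?_
      obtain ⟨b, hb, hab⟩ := happ ε hε
      simpa [hb.2 t ht] using hab t

theorem IsEssentialIdealOf.eq_zero_of_forall_idealSupp {A I E : Set (∀ t, H t →L[ℂ] H t)}
    (hI : IsEssentialIdealOf A I) (hE : IsIdealOf A E)
    (hvan : ∀ a ∈ E, ∀ t ∈ idealSupp I, a t = 0) {b : ∀ t, H t →L[ℂ] H t} (hb : b ∈ E) :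
    b = 0 := by
  by_contra hb₀
  obtain ⟨c, hcI, hcE, hc₀⟩ := hI.2 E hE ⟨b, hb, hb₀⟩
  obtain ⟨t, ht⟩ := Function.ne_iff.1 hc₀
  exact ht (hvan c hcE t ⟨c, hcI, ht⟩)

end

section

variable {T : Type*} {H : T → Type*}
  [∀ t, NormedAddCommGroup (H t)] [∀ t, InnerProductSpace ℂ (H t)]
  [TopologicalSpace T]

theorem exists_continuousMap_eventually_one_of_isOpen [LocallyCompactSpace T] [T2Space T]
    {V : Set T} (hV : IsOpen V) {t₀ : T} (ht₀ : t₀ ∈ V) :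
    ∃ g : C(T, ℝ), IsCompact (tsupport g) ∧ tsupport g ⊆ V ∧ ∀ᶠ t in 𝓝 t₀, g t = 1 := by
  obtain ⟨K, hK, ht₀K, hKV⟩ := exists_compact_subset hV ht₀
  obtain ⟨g, hg1, hgc, hgV, -⟩ := exists_continuousMap_one_of_isCompact_subset_isOpen hK hV hKV
  exact ⟨g, hgc, hgV, eventually_of_mem (mem_interior_iff_mem_nhds.1 ht₀K)
    fun _ ht => hg1 ht⟩

/-- The paper's `(Ω|_X)₀`. -/
def restrictC0 (Ω : Set (∀ t, H t)) (X : Set T) : Set (∀ x : X, H x.1) :=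
  {ω' | ∃ ω ∈ Ω, (∀ x : X, ω' x = ω x.1) ∧
    Tendsto (fun x : X => ‖ω x.1‖) (cocompact X) (𝓝 0)}

def cutoff (g : C(T, ℝ)) (ω : ∀ t, H t) : ∀ t, H t :=
  fun t => (g t : ℂ) • ω t

theorem rankOneField_cutoff_of_eq_one {g : C(T, ℝ)} {t : T} (hg : g t = 1) (ω ν : ∀ t, H t) :
    rankOneField (cutoff g ω) (cutoff g ν) t = rankOneField ω ν t := by
  simp [rankOneField, cutoff, hg]

theorem hasCompactSupport_norm_cutoff [T2Space T] {g : C(T, ℝ)} (hg : IsCompact (tsupport g))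
    (ω : ∀ t, H t) : HasCompactSupport fun t => ‖cutoff g ω t‖ :=
  HasCompactSupport.intro hg fun t ht => by simp [cutoff, image_eq_zero_of_notMem_tsupport ht]

theorem hasCompactSupport_norm_cutoff_restrict [T2Space T] {g : C(T, ℝ)}
    (hg : IsCompact (tsupport g)) {X : Set T} (hgX : tsupport g ⊆ X) (ω : ∀ t, H t) :
    HasCompactSupport fun x : X => ‖cutoff g ω x.1‖ := by
  refine HasCompactSupport.intro (K := Subtype.val ⁻¹' tsupport g) ?_ fun x hx => ?_
  · rwa [Subtype.isCompact_iff, image_preimage_eq_inter_range, Subtype.range_val,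
      inter_eq_left.2 hgX]
  · simp [cutoff, image_eq_zero_of_notMem_tsupport hx]

theorem exists_sum_rankOneField_of_mem_finRankFields {Ω : Set (∀ t, H t)} {X : Set T}
    {a : ∀ x : X, H x.1 →L[ℂ] H x.1} (ha : a ∈ finRankFields (restrictC0 Ω X)) :
    ∃ (n : ℕ) (ω ν : Fin n → ∀ t, H t), (∀ i, ω i ∈ Ω) ∧ (∀ i, ν i ∈ Ω) ∧
      a = fun x : X => ∑ i, rankOneField (ω i) (ν i) x.1 := by
  obtain ⟨n, ω', ν', hω', hν', rfl⟩ := ha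
  choose ω hω hωeq using hω'
  choose ν hν hνeq using hν'
  exact ⟨n, ω, ν, hω, hν, funext fun x => by simp [rankOneField, (hωeq _).1 x, (hνeq _).1 x]⟩

namespace IsCtsHilbertBundle

variable {Ω : Set (∀ t, H t)} (hΩ : IsCtsHilbertBundle Ω)
include hΩ

theorem cutoff_mem (g : C(T, ℝ)) {ω : ∀ t, H t} (hω : ω ∈ Ω) : cutoff g ω ∈ Ω :=
  hΩ.smul_mem ⟨fun t => (g t : ℂ), by fun_prop⟩ ω hω

theorem continuous_inner {μ ν : ∀ t, H t} (hμ : μ ∈ Ω) (hν : ν ∈ Ω) :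
    Continuous fun t => ⟪μ t, ν t⟫_ℂ := by
  have key : ∀ c : ℂ, Continuous fun t => ‖μ t + c • ν t‖ := fun c =>
    hΩ.norm_continuous _ (hΩ.add_mem _ hμ _ (hΩ.smul_mem (ContinuousMap.const T c) _ hν))
  have h₁ := key 1
  have h₂ := key (-1)
  have h₃ := key (-Complex.I)
  have h₄ := key Complex.I
  simp only [one_smul, neg_smul, ← sub_eq_add_neg] at h₁ h₂ h₃
  simp_rw [inner_eq_sum_norm_sq_div_four (𝕜 := ℂ), RCLike.I_to_complex]
  fun_prop

theorem weaklyCts_rankOneField {μ ν : ∀ t, H t} (hμ : μ ∈ Ω) (hν : ν ∈ Ω) :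
    WeaklyCts Ω (rankOneField μ ν) := by
  intro ω₁ hω₁ ω₂ hω₂
  simp only [rankOneField_apply, inner_smul_left, inner_conj_symm]
  exact (hΩ.continuous_inner hω₁ hν).mul (hΩ.continuous_inner hμ hω₂)

theorem cutoff_restrict_mem_restrictC0 [T2Space T] {g : C(T, ℝ)} (hg : IsCompact (tsupport g))
    {X : Set T} (hgX : tsupport g ⊆ X) {ω : ∀ t, H t} (hω : ω ∈ Ω) :
    (fun x : X => cutoff g ω x.1) ∈ restrictC0 Ω X :=
  ⟨cutoff g ω, hΩ.cutoff_mem g hω, fun _ => rfl,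
    (hasCompactSupport_norm_cutoff_restrict hg hgX ω).is_zero_at_infty⟩

theorem sum_rankOneField_cutoff_mem_finRankFields [T2Space T] {g : C(T, ℝ)}
    (hg : IsCompact (tsupport g)) {X : Set T} (hgX : tsupport g ⊆ X) {n : ℕ}
    {ω ν : Fin n → ∀ t, H t} (hω : ∀ i, ω i ∈ Ω) (hν : ∀ i, ν i ∈ Ω) :
    (fun x : X => ∑ i, rankOneField (cutoff g (ω i)) (cutoff g (ν i)) x.1) ∈
      finRankFields (restrictC0 Ω X) :=
  ⟨n, fun i x => cutoff g (ω i) x.1, fun i x => cutoff g (ν i) x.1,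
    fun i => hΩ.cutoff_restrict_mem_restrictC0 hg hgX (hω i),
    fun i => hΩ.cutoff_restrict_mem_restrictC0 hg hgX (hν i), rfl⟩

theorem continuous_inner_apply_of_mem_finRankFields {X : Set T}
    {b : ∀ x : X, H x.1 →L[ℂ] H x.1} (hb : b ∈ finRankFields (restrictC0 Ω X)) {ξ : ∀ x : X, H x.1}
    (hξ : ∀ σ ∈ Ω, Continuous fun x : X => ⟪σ x.1, ξ x⟫_ℂ) {ζ : ∀ t, H t} (hζ : ζ ∈ Ω) :
    Continuous fun x : X => ⟪ζ x.1, b x (ξ x)⟫_ℂ := by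
  obtain ⟨n, ω, ν, hω, hν, rfl⟩ := exists_sum_rankOneField_of_mem_finRankFields hb
  simp only [sum_apply, rankOneField_apply, inner_sum, inner_smul_right]
  exact continuous_finsetSum _ fun i _ =>
    (hξ _ (hν i)).mul ((hΩ.continuous_inner hζ (hω i)).comp continuous_subtype_val)

end IsCtsHilbertBundle

theorem StrictlyCts.restrict [LocallyCompactSpace T] [T2Space T] {Ω : Set (∀ t, H t)}
    (hΩ : IsCtsHilbertBundle Ω) {X Y : Set T} (hX : IsOpen X) (hXY : X ⊆ Y)
    {x : ∀ y : Y, H y.1 →L[ℂ] H y.1} (hx : StrictlyCts (finRankFields (restrictC0 Ω Y)) x) :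
    StrictlyCts (finRankFields (restrictC0 Ω X)) fun t : X => x (inclusion hXY t) := by
  intro t₀ a ha ε hε
  obtain ⟨n, ω, ν, hω, hν, rfl⟩ := exists_sum_rankOneField_of_mem_finRankFields ha
  obtain ⟨g, hgc, hgX, hg1⟩ := exists_continuousMap_eventually_one_of_isOpen hX t₀.2
  obtain ⟨W, hW1, hWo, ht₀W⟩ := eventually_nhds_iff.1 hg1
  obtain ⟨U, hUo, ht₀U, b, hb, hxb⟩ := hx (inclusion hXY t₀) _
    (hΩ.sum_rankOneField_cutoff_mem_finRankFields hgc (hgX.trans hXY) hω hν) ε hε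
  obtain ⟨m, ρ, σ, hρ, hσ, rfl⟩ := exists_sum_rankOneField_of_mem_finRankFields hb
  refine ⟨Subtype.val ⁻¹' W ∩ inclusion hXY ⁻¹' U,
    (hWo.preimage continuous_subtype_val).inter (hUo.preimage (continuous_inclusion hXY)),
    ⟨ht₀W, ht₀U⟩, _, hΩ.sum_rankOneField_cutoff_mem_finRankFields hgc hgX hρ hσ, ?_⟩
  rintro t ⟨htW, htU⟩
  simpa only [rankOneField_cutoff_of_eq_one (hW1 _ htW)] using hxb _ htU

theorem StrictlyCts.continuous_inner_apply {Ω : Set (∀ t, H t)} (hΩ : IsCtsHilbertBundle Ω)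
    {X : Set T} {x a : ∀ s : X, H s.1 →L[ℂ] H s.1}
    (hx : StrictlyCts (finRankFields (restrictC0 Ω X)) x) (ha : a ∈ finRankFields (restrictC0 Ω X))
    {ζ η : ∀ t, H t} (hζ : ζ ∈ Ω) (hη : η ∈ Ω) :
    Continuous fun s : X => ⟪ζ s.1, x s (a s (η s.1))⟫_ℂ := by
  have hη' : ∀ σ ∈ Ω, Continuous fun s : X => ⟪σ s.1, η s.1⟫_ℂ := fun σ hσ =>
    (hΩ.continuous_inner hσ hη).comp continuous_subtype_val
  have hF : ∀ b ∈ finRankFields (restrictC0 Ω X),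
      Continuous fun s : X => ⟪ζ s.1, b s (a s (η s.1))⟫_ℂ := fun b hb =>
    hΩ.continuous_inner_apply_of_mem_finRankFields hb
      (fun σ hσ => hΩ.continuous_inner_apply_of_mem_finRankFields ha hη' hσ) hζ
  set N : X → ℝ := fun s => ‖ζ s.1‖ * ‖η s.1‖
  have hN : Continuous N :=
    ((hΩ.norm_continuous ζ hζ).mul (hΩ.norm_continuous η hη)).comp continuous_subtype_val
  refine continuous_iff_continuousAt.2 fun s₀ =>
    continuousAt_of_locally_uniform_approx_of_continuousAt fun u hu => ?_
  obtain ⟨δ, hδ, hδu⟩ := Metric.mem_uniformity_dist.1 hu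
  set M := N s₀ + 1
  have hM : 0 < M := by positivity
  obtain ⟨U, hUo, hs₀U, b, hb, hxb⟩ := hx s₀ a ha (δ / M) (by positivity)
  refine ⟨U ∩ {s | N s < M}, inter_mem (hUo.mem_nhds hs₀U)
      (hN.continuousAt.eventually_lt continuousAt_const (lt_add_one _)),
    _, (hF b hb).continuousAt, fun s ⟨hsU, hsN⟩ => hδu ?_⟩
  have hxba : ‖(x s - b s) * a s‖ ≤ δ / M :=
    ((le_add_of_nonneg_right (norm_nonneg _)).trans_lt (hxb s hsU)).le
  calc dist ⟪ζ s.1, x s (a s (η s.1))⟫_ℂ ⟪ζ s.1, b s (a s (η s.1))⟫_ℂ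
      = ‖⟪ζ s.1, ((x s - b s) * a s) (η s.1)⟫_ℂ‖ := by
        rw [dist_eq_norm, ← inner_sub_right]
        rfl
    _ ≤ ‖ζ s.1‖ * (‖(x s - b s) * a s‖ * ‖η s.1‖) :=
        (norm_inner_le_norm _ _).trans (mul_le_mul_of_nonneg_left
          (ContinuousLinearMap.le_opNorm _ _) (norm_nonneg _))
    _ = N s * ‖(x s - b s) * a s‖ := by ring
    _ ≤ N s * (δ / M) := mul_le_mul_of_nonneg_left hxba (by positivity)
    _ < M * (δ / M) := mul_lt_mul_of_pos_right hsN (by positivity)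
    _ = δ := mul_div_cancel₀ _ hM.ne'

theorem StrictlyCts.eq_of_eqOn_of_subset_closure [LocallyCompactSpace T] [T2Space T]
    {Ω : Set (∀ t, H t)} (hΩ : IsCtsHilbertBundle Ω) {X Y : Set T} (hY : IsOpen Y) (hXY : X ⊆ Y)
    (hYX : Y ⊆ closure X) {x y : ∀ s : Y, H s.1 →L[ℂ] H s.1}
    (hx : StrictlyCts (finRankFields (restrictC0 Ω Y)) x)
    (hy : StrictlyCts (finRankFields (restrictC0 Ω Y)) y)
    (hxy : ∀ t : X, x (inclusion hXY t) = y (inclusion hXY t)) : x = y := by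
  funext s₀
  ext v
  by_contra hne
  set w := x s₀ v - y s₀ v
  have hw : w ≠ 0 := sub_ne_zero.2 hne
  obtain ⟨ω, hω, hωs₀⟩ := hΩ.full s₀.1 v
  obtain ⟨ν, hν, hνs₀⟩ := hΩ.full s₀.1 w
  obtain ⟨g, hgc, hgY, hg1⟩ := exists_continuousMap_eventually_one_of_isOpen hY s₀.2
  set ζ := cutoff g ν
  have hζ : ζ ∈ Ω := hΩ.cutoff_mem g hν
  set a : ∀ s : Y, H s.1 →L[ℂ] H s.1 := fun s => ∑ _ : Fin 1, rankOneField (cutoff g ω) ζ s.1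
  have ha : a ∈ finRankFields (restrictC0 Ω Y) :=
    hΩ.sum_rankOneField_cutoff_mem_finRankFields hgc hgY (fun _ => hω) (fun _ => hν)
  set f : Y → ℂ := fun s => ⟪ζ s.1, x s (a s (ζ s.1))⟫_ℂ - ⟪ζ s.1, y s (a s (ζ s.1))⟫_ℂ
  have hf : Continuous f :=
    (hx.continuous_inner_apply hΩ ha hζ hζ).sub (hy.continuous_inner_apply hΩ ha hζ hζ)
  have hs₀ : s₀ ∈ closure {s : Y | s.1 ∈ X} := by
    rw [closure_subtype, show {s : Y | s.1 ∈ X} = Subtype.val ⁻¹' X from rfl,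
      Subtype.image_preimage_coe, inter_eq_right.2 hXY]
    exact hYX s₀.2
  have hfs₀ : f s₀ = 0 := (isClosed_eq hf continuous_const).closure_subset_iff.2
    (fun s hs => by simp [f, show x s = y s from hxy ⟨s.1, hs⟩]) hs₀
  have hζs₀ : ζ s₀.1 = w := by simp [ζ, cutoff, hg1.self_of_nhds, hνs₀]
  have has₀ : a s₀ w = ⟪w, w⟫_ℂ • v := by
    simp [a, rankOneField_apply, hζs₀, cutoff, hg1.self_of_nhds, hωs₀]
  have : f s₀ = ⟪w, w⟫_ℂ * ⟪w, w⟫_ℂ := by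
    simp only [f, hζs₀, has₀, map_smul, ← inner_sub_right, ← smul_sub, inner_smul_right]
    rfl
  exact mul_self_ne_zero.2 (inner_self_ne_zero.2 hw) (this ▸ hfs₀)

variable [∀ t, CompleteSpace (H t)]

namespace IsCtsHilbertBundle

variable {Ω : Set (∀ t, H t)} (hΩ : IsCtsHilbertBundle Ω)
include hΩ

theorem almostFinDim_rankOneField_self {μ : ∀ t, H t} (hμ : μ ∈ Ω) :
    AlmostFinDim Ω (rankOneField μ μ) := by
  intro t₀ ε hε
  have hnorm := hΩ.norm_continuous μ hμ
  by_cases h : μ t₀ = 0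
  · refine ⟨{t | ‖μ t‖ * ‖μ t‖ < ε}, isOpen_lt (by fun_prop) continuous_const,
      by simpa [h] using hε, 0, Fin.elim0, fun i => i.elim0, fun t ht =>
        ⟨linearIndependent_empty_type, 0, .zero, .zero _, by simp, ?_⟩⟩
    simpa [norm_rankOneField] using ht
  · have hU : IsOpen {t | μ t ≠ 0} := by
      simpa only [ne_eq, norm_eq_zero] using
        isOpen_ne_fun hnorm (continuous_const (y := (0 : ℝ)))
    refine ⟨{t | μ t ≠ 0}, hU, h, 1, fun _ => μ, fun _ => hμ, fun t ht =>
      ⟨.of_subsingleton 0 ht, (ℂ ∙ μ t).starProjection,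
        Submodule.isIdempotentElem_starProjection _, isSelfAdjoint_starProjection _, by simp, ?_⟩⟩
    simpa [rankOneField, starProjection_span_singleton_mul_smulRight_innerSL_mul] using hε

theorem rankOneField_self_mem_fellAlgebra {μ : ∀ t, H t} (hμ : μ ∈ Ω)
    (hμ₀ : Tendsto (fun t => ‖μ t‖) (cocompact T) (𝓝 0)) :
    rankOneField μ μ ∈ FellAlgebra Ω := by
  have hnorm := hΩ.norm_continuous μ hμ
  refine ⟨hΩ.weaklyCts_rankOneField hμ hμ, hΩ.almostFinDim_rankOneField_self hμ, ?_, ?_⟩ <;>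
    simp only [norm_rankOneField]
  · fun_prop
  · simpa using hμ₀.mul hμ₀

theorem idealSupp_subset_closure [LocallyCompactSpace T] [T2Space T]
    {I J : Set (∀ t, H t →L[ℂ] H t)} (hI : IsEssentialIdealOf (FellAlgebra Ω) I)
    (hJ : IsIdealOf (FellAlgebra Ω) J) :
    idealSupp J ⊆ closure (idealSupp I) := by
  rintro t₀ ⟨b, hbJ, hbt₀⟩
  by_contra ht₀
  obtain ⟨ξ, hξ⟩ : ∃ ξ, b t₀ ξ ≠ 0 := by
    by_contra! h
    exact hbt₀ (ContinuousLinearMap.ext h)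
  obtain ⟨ω, hω, hωt₀⟩ := hΩ.full t₀ (b t₀ ξ)
  obtain ⟨g, hgc, hgZ, hg1⟩ :=
    exists_continuousMap_eventually_one_of_isOpen isClosed_closure.isOpen_compl ht₀
  set μ := cutoff g ω
  have hμA : rankOneField μ μ ∈ FellAlgebra Ω := hΩ.rankOneField_self_mem_fellAlgebra
    (hΩ.cutoff_mem g hω) (hasCompactSupport_norm_cutoff hgc ω).is_zero_at_infty
  have hvan : ∀ t ∈ closure (idealSupp I), (rankOneField μ μ * b) t = 0 := fun t ht => by
    have hgt : g t = 0 := image_eq_zero_of_notMem_tsupport fun h => hgZ h ht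
    ext
    simp [μ, rankOneField_apply, cutoff, hgt]
  have hE := hJ.sep_forall_eq_zero (closure (idealSupp I))
  have hμb : rankOneField μ μ * b = 0 := hI.eq_zero_of_forall_idealSupp hE
    (fun a ha t ht => ha.2 t (subset_closure ht)) ⟨hJ.mul_mem_left _ hμA b hbJ, hvan⟩
  have hμt₀ : μ t₀ = b t₀ ξ := by simp [μ, cutoff, hg1.self_of_nhds, hωt₀]
  have := congr($hμb t₀ ξ)
  simp [rankOneField_apply, hμt₀, hξ] at this

end IsCtsHilbertBundle

theorem isOpen_idealSupp {Ω : Set (∀ t, H t)} {I : Set (∀ t, H t →L[ℂ] H t)}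
    (hI : I ⊆ FellAlgebra Ω) : IsOpen (idealSupp I) :=
  isOpen_iff_mem_nhds.2 fun _ ⟨b, hb, hbt⟩ =>
    ((hI hb).2.2.1.continuousAt.eventually_ne (norm_ne_zero_iff.2 hbt)).mono
      fun _ hs => ⟨b, hb, norm_ne_zero_iff.1 hs⟩

end

theorem multiplier_restriction_monomorphism_general
    {T : Type} [TopologicalSpace T] [LocallyCompactSpace T] [T2Space T]
    {H : T → Type} [∀ t, NormedAddCommGroup (H t)] [∀ t, InnerProductSpace ℂ (H t)]
    [∀ t, CompleteSpace (H t)]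
    (Ω : Set (∀ t, H t)) (hΩ : IsCtsHilbertBundle Ω)
    (I J : Set (∀ t, H t →L[ℂ] H t))
    (hI : IsEssentialIdealOf (FellAlgebra Ω) I)
    (hJ : IsEssentialIdealOf (FellAlgebra Ω) J)
    (hX : (idealSupp I : Set T) ⊆ idealSupp J) :
    -- `(Ω|_X)₀` and the associated `F((Ω|_X)₀)`, for `X = X^I, X^J`:
    letI restΩ₀ : (X : Set T) → Set (∀ x : X, H x.1) := fun X =>
      {ω' | ∃ ω ∈ Ω, (∀ x : X, ω' x = ω x.1) ∧
        Filter.Tendsto (fun x : X => ‖ω x.1‖) (Filter.cocompact X) (nhds 0)}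
    letI res : (∀ x : idealSupp J, H x.1 →L[ℂ] H x.1) →
        (∀ x : idealSupp I, H x.1 →L[ℂ] H x.1) := fun x t => x ⟨t.1, hX t.2⟩
    -- restriction carries `M(J)` into `M(I)` …
    (∀ x ∈ MultSet (finRankFields (restΩ₀ (idealSupp J))),
      res x ∈ MultSet (finRankFields (restΩ₀ (idealSupp I)))) ∧
    -- … is a *-homomorphism …
    (∀ x y, res (x + y) = res x + res y) ∧
    (∀ (c : ℂ) x, res (c • x) = c • res x) ∧
    (∀ x y, res (x * y) = res x * res y) ∧
    (∀ x, res (star x) = star (res x)) ∧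
    -- … and is injective on `M(J)`:
    (∀ x ∈ MultSet (finRankFields (restΩ₀ (idealSupp J))),
      ∀ y ∈ MultSet (finRankFields (restΩ₀ (idealSupp J))),
        res x = res y → x = y) := by
  have hXI : IsOpen (idealSupp I) := isOpen_idealSupp hI.1.subset
  have hXJ : IsOpen (idealSupp J) := isOpen_idealSupp hJ.1.subset
  have hdense : idealSupp J ⊆ closure (idealSupp I) := hΩ.idealSupp_subset_closure hI hJ.1
  exact ⟨fun x ⟨⟨C, hC⟩, hx⟩ => ⟨⟨C, fun t => hC _⟩, hx.restrict hΩ hXI hX⟩,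
    fun _ _ => rfl, fun _ _ => rfl, fun _ _ => rfl, fun _ => rfl,
    fun x hx y hy hxy => hx.2.eq_of_eqOn_of_subset_closure hΩ hXJ hX hdense hy.2 (congrFun hxy)⟩

/-- Let `A` be the Fell C*-algebra of a continuous Hilbert
bundle over `T` and `I ⊆ J` essential ideals of `A`.  If a bounded operator
field `x` on `X^J` is strictly continuous w.r.t. `F((Ω|_{X^J})₀)`, then its
restriction to `X^I` is strictly continuous w.r.t. `F((Ω|_{X^I})₀)`; the
induced map `M(J) → M(I)` is an injective *-homomorphism. -/
theorem multiplier_restriction_monomorphism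
    {T : Type} [TopologicalSpace T] [LocallyCompactSpace T] [T2Space T]
    {H : T → Type} [∀ t, NormedAddCommGroup (H t)] [∀ t, InnerProductSpace ℂ (H t)]
    [∀ t, CompleteSpace (H t)]
    (Ω : Set (∀ t, H t)) (hΩ : IsCtsHilbertBundle Ω)
    (I J : Set (∀ t, H t →L[ℂ] H t))
    (hI : IsEssentialIdealOf (FellAlgebra Ω) I)
    (hJ : IsEssentialIdealOf (FellAlgebra Ω) J)
    (hIJ : I ⊆ J)
    (hX : (idealSupp I : Set T) ⊆ idealSupp J) :
    -- `(Ω|_X)₀` and the associated `F((Ω|_X)₀)`, for `X = X^I, X^J`: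
    letI restΩ₀ : (X : Set T) → Set (∀ x : X, H x.1) := fun X =>
      {ω' | ∃ ω ∈ Ω, (∀ x : X, ω' x = ω x.1) ∧
        Filter.Tendsto (fun x : X => ‖ω x.1‖) (Filter.cocompact X) (nhds 0)}
    letI res : (∀ x : idealSupp J, H x.1 →L[ℂ] H x.1) →
        (∀ x : idealSupp I, H x.1 →L[ℂ] H x.1) := fun x t => x ⟨t.1, hX t.2⟩
    -- restriction carries `M(J)` into `M(I)` …
    (∀ x ∈ MultSet (finRankFields (restΩ₀ (idealSupp J))),
      res x ∈ MultSet (finRankFields (restΩ₀ (idealSupp I)))) ∧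
    -- … is a *-homomorphism …
    (∀ x y, res (x + y) = res x + res y) ∧
    (∀ (c : ℂ) x, res (c • x) = c • res x) ∧
    (∀ x y, res (x * y) = res x * res y) ∧
    (∀ x, res (star x) = star (res x)) ∧
    -- … and is injective on `M(J)`:
    (∀ x ∈ MultSet (finRankFields (restΩ₀ (idealSupp J))),
      ∀ y ∈ MultSet (finRankFields (restΩ₀ (idealSupp J))),
        res x = res y → x = y) :=
  multiplier_restriction_monomorphism_general Ω hΩ I J hI hJ hX
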